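/- arXiv:1612.04561 — 4 statements merged into one kernel-verified Lean document; each statement's English description precedes it below -/
import Mathlib

section
/- For any finite-dimensional k-algebra A there is an isomorphism of A-bimodules between the end ∫_{m ∈ A-Mod} m ⊗_k m* and the regular bimodule A, and an isomorphism of A-bimodules between the coend ∫^{m ∈ A-Mod} m ⊗_k m* and the co-regular bimodule A*. -/
open CategoryTheory CategoryTheory.Limits Opposite

universe w v u v₁ u₁ v₂ u₂ v₃ u₃ v₄ u₄

namespace EW

variable (k : Type u) [Field k]

/-- `k`-linear structure on finitely generated modules over a `k`-algebra. -/
noncomputable instance fgLinear (A : Type u) [Ring A] [Algebra k A] :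
    CategoryTheory.Linear k (FGModuleCat.{u} A) :=
  (inferInstance :
    CategoryTheory.Linear k (ObjectProperty.FullSubcategory fun V : ModuleCat.{u} A => Module.Finite A V))

/-- A finite `k`-linear category: a `k`-linear category which is linearly equivalent to the
category of finite-dimensional (equivalently, finitely generated) modules over some
finite-dimensional `k`-algebra. -/
class IsFiniteLinear (C : Type u₁) [Category.{v₁} C] [Preadditive C]
    [CategoryTheory.Linear k C] : Prop where
  out : ∃ (A : Type u) (_ : Ring A) (_ : Algebra k A) (_ : FiniteDimensional k A)
      (e : C ⥤ FGModuleCat.{u} A) (_ : e.Additive), e.Linear k ∧ e.IsEquivalence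


/-- The opposite of a `k`-linear category is `k`-linear. -/
noncomputable instance opLinear {C : Type u₁} [Category.{v₁} C] [Preadditive C]
    [CategoryTheory.Linear k C] : CategoryTheory.Linear k Cᵒᵖ where
  homModule X Y := (opEquiv X Y).module k
  smul_comp := by
    intro X Y Z r f g
    apply Quiver.Hom.unop_inj
    exact CategoryTheory.Linear.comp_smul _ _ _ _ _ _
  comp_smul := by
    intro X Y Z f r g
    apply Quiver.Hom.unop_inj
    exact CategoryTheory.Linear.smul_comp _ _ _ _ _ _

section Nakayama


variable {X : Type u₁} [Category.{v₁} X] [Preadditive X] [CategoryTheory.Linear k X]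

/-- Data exhibiting a functor `N` as the left exact Nakayama functor
`Π̄_X = ∫_{x ∈ X} Hom_X(x, -) ⊗ x` of `X`: for every `y`, the object `N.obj y` is the end
`∫_{x} Hom_X(x,y) ⊗ x`.  Morphisms `d ⟶ Hom_X(x,y) ⊗ x` into the copower are identified
with linear maps `Hom_X(x,y)* →ₗ[k] (d ⟶ x)`, so the universal wedge is recorded as the
family `π`, which is dinatural (`wedge`), natural in `y` (`natural`) and universal. -/
structure LexNakayamaData : Type _ where
  N : X ⥤ X
  π : ∀ y x : X, Module.Dual k (x ⟶ y) →ₗ[k] (N.obj y ⟶ x)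
  wedge : ∀ {y x x' : X} (f : x ⟶ x') (ψ : Module.Dual k (x ⟶ y)),
    π y x ψ ≫ f = π y x' (ψ.comp (CategoryTheory.Linear.leftComp k y f))
  natural : ∀ {y y' : X} (g : y ⟶ y') (x : X) (ψ : Module.Dual k (x ⟶ y')),
    N.map g ≫ π y' x ψ = π y x (ψ.comp (CategoryTheory.Linear.rightComp k x g))
  universal : ∀ (y d : X) (θ : ∀ x : X, Module.Dual k (x ⟶ y) →ₗ[k] (d ⟶ x)),
    (∀ {x x' : X} (f : x ⟶ x') (ψ : Module.Dual k (x ⟶ y)),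
      θ x ψ ≫ f = θ x' (ψ.comp (CategoryTheory.Linear.leftComp k y f))) →
    ∃! κ : d ⟶ N.obj y, ∀ (x : X) (ψ : Module.Dual k (x ⟶ y)), θ x ψ = κ ≫ π y x ψ

/-- Data exhibiting a functor `N` as the (right exact) Nakayama functor
`Π_X = ∫^{x ∈ X} Hom_X(-, x)* ⊗ x` of `X`: for every `y`, the object `N.obj y` is the coend
`∫^{x} Hom_X(y,x)* ⊗ x`.  Morphisms `Hom_X(y,x)* ⊗ x ⟶ d` out of the components are
identified with linear maps `Hom_X(y,x)* →ₗ[k] (x ⟶ d)`, so the universal wedge is recorded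
as the family `ι`, which is dinatural (`wedge`), natural in `y` (`natural`) and universal. -/
structure RexNakayamaData : Type _ where
  N : X ⥤ X
  ι : ∀ y x : X, Module.Dual k (y ⟶ x) →ₗ[k] (x ⟶ N.obj y)
  wedge : ∀ {y x x' : X} (f : x ⟶ x') (ψ : Module.Dual k (y ⟶ x')),
    f ≫ ι y x' ψ = ι y x (ψ.comp (CategoryTheory.Linear.rightComp k y f))
  natural : ∀ {y y' : X} (g : y ⟶ y') (x : X) (ψ : Module.Dual k (y ⟶ x)),
    ι y x ψ ≫ N.map g = ι y' x (ψ.comp (CategoryTheory.Linear.leftComp k x g))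
  universal : ∀ (y d : X) (θ : ∀ x : X, Module.Dual k (y ⟶ x) →ₗ[k] (x ⟶ d)),
    (∀ {x x' : X} (f : x ⟶ x') (ψ : Module.Dual k (y ⟶ x')),
      f ≫ θ x' ψ = θ x (ψ.comp (CategoryTheory.Linear.rightComp k y f))) →
    ∃! κ : N.obj y ⟶ d, ∀ (x : X) (ψ : Module.Dual k (y ⟶ x)), θ x ψ = ι y x ψ ≫ κ

end Nakayama

section Deligne

/-- The universal property characterizing `box : P ⥤ Q ⥤ D` as exhibiting `D` as the
Deligne product `P ⊠ Q`: `box` is exact in each variable, and `D` is universal among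
`k`-linear categories for functors out of `P × Q` which are right exact in each variable. -/
class IsDeligneProduct {P : Type u₁} [Category.{v₁} P] [Preadditive P]
    [CategoryTheory.Linear k P]
    {Q : Type u₂} [Category.{v₂} Q] [Preadditive Q] [CategoryTheory.Linear k Q]
    {D : Type u₃} [Category.{v₃} D] [Preadditive D] [CategoryTheory.Linear k D]
    (box : P ⥤ Q ⥤ D) : Prop where
  exact_left : ∀ p : P,
    PreservesFiniteLimits (box.obj p) ∧ PreservesFiniteColimits (box.obj p)
  exact_right : ∀ q : Q,
    PreservesFiniteLimits (box.flip.obj q) ∧ PreservesFiniteColimits (box.flip.obj q)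
  lift : ∀ {X : Type u₄} [Category.{v₄} X] [Preadditive X] [CategoryTheory.Linear k X]
      (F : P ⥤ Q ⥤ X),
      (∀ p, PreservesFiniteColimits (F.obj p)) →
      (∀ q, PreservesFiniteColimits (F.flip.obj q)) →
      ∃ G : D ⥤ X, PreservesFiniteColimits G ∧
        Nonempty (box ⋙ (Functor.whiskeringRight Q D X).obj G ≅ F)
  lift_unique : ∀ {X : Type u₄} [Category.{v₄} X] [Preadditive X]
      [CategoryTheory.Linear k X] (G G' : D ⥤ X),
      PreservesFiniteColimits G → PreservesFiniteColimits G' →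
      Nonempty (box ⋙ (Functor.whiskeringRight Q D X).obj G ≅ box ⋙ (Functor.whiskeringRight Q D X).obj G') →
      Nonempty (G ≅ G')

variable {A : Type u₁} [Category.{v₁} A] {C : Type u₂} [Category.{v₂} C]
  {D : Type u₃} [Category.{v₃} D]

/-- Data exhibiting an object `pt` of (a model `D` of) the Deligne product `Aᵒᵖ ⊠ C` as the
coend `∫^{j ∈ J} (Lf j)‾ ⊠ (Rf j)`, via a universal dinatural family. -/
structure BoxCoend (box : Aᵒᵖ ⥤ C ⥤ D) {J : Type u₄} [Category.{v₄} J]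
    (Lf : J ⥤ A) (Rf : J ⥤ C) where
  pt : D
  ι : ∀ j : J, (box.obj (op (Lf.obj j))).obj (Rf.obj j) ⟶ pt
  dinat : ∀ {j j' : J} (f : j ⟶ j'),
    (box.map (Lf.map f).op).app (Rf.obj j) ≫ ι j
      = (box.obj (op (Lf.obj j'))).map (Rf.map f) ≫ ι j'
  universal : ∀ (z : D) (θ : ∀ j : J, (box.obj (op (Lf.obj j))).obj (Rf.obj j) ⟶ z),
    (∀ {j j' : J} (f : j ⟶ j'),
      (box.map (Lf.map f).op).app (Rf.obj j) ≫ θ j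
        = (box.obj (op (Lf.obj j'))).map (Rf.map f) ≫ θ j') →
    ∃! κ : pt ⟶ z, ∀ j, ι j ≫ κ = θ j

/-- Data exhibiting an object `pt` of (a model `D` of) the Deligne product `Aᵒᵖ ⊠ C` as the
end `∫_{j ∈ J} (Lf j)‾ ⊠ (Rf j)`, via a universal dinatural family. -/
structure BoxEnd (box : Aᵒᵖ ⥤ C ⥤ D) {J : Type u₄} [Category.{v₄} J]
    (Lf : J ⥤ A) (Rf : J ⥤ C) where
  pt : D
  π : ∀ j : J, pt ⟶ (box.obj (op (Lf.obj j))).obj (Rf.obj j)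
  dinat : ∀ {j j' : J} (f : j ⟶ j'),
    π j ≫ (box.obj (op (Lf.obj j))).map (Rf.map f)
      = π j' ≫ (box.map (Lf.map f).op).app (Rf.obj j')
  universal : ∀ (z : D) (θ : ∀ j : J, z ⟶ (box.obj (op (Lf.obj j))).obj (Rf.obj j)),
    (∀ {j j' : J} (f : j ⟶ j'),
      θ j ≫ (box.obj (op (Lf.obj j))).map (Rf.map f)
        = θ j' ≫ (box.map (Lf.map f).op).app (Rf.obj j')) →
    ∃! κ : z ⟶ pt, ∀ j, κ ≫ π j = θ j

end Deligne

end EW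

set_option linter.unusedSectionVars false

namespace EW

section ModulePrelim

variable (k : Type u) [Field k] (A : Type u) [Ring A] [Algebra k A] [FiniteDimensional k A]
variable (B : Type u) [Ring B] [Algebra k B] [FiniteDimensional k B]

/-- The `k`-module structure on (the carrier of) a finitely generated module over the
`k`-algebra `B`, by restriction of scalars. -/
noncomputable instance modk (N : FGModuleCat B) : Module k N :=
  Module.compHom N (algebraMap k B)

noncomputable instance modk_tower (N : FGModuleCat B) : IsScalarTower k B N :=
  ⟨fun c b x => by rw [Algebra.smul_def, mul_smul]; rfl⟩

noncomputable instance modk_smulcomm (N : FGModuleCat B) : SMulCommClass k B N :=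
  ⟨fun c b x => by
    show (algebraMap k B c) • b • x = b • (algebraMap k B c) • x
    rw [← mul_smul, ← mul_smul, Algebra.commutes]⟩

noncomputable instance modk_smulcomm' (N : FGModuleCat B) : SMulCommClass B k N :=
  SMulCommClass.symm k B N

/-- The underlying `k`-linear map of a morphism of finitely generated `B`-modules. -/
noncomputable def klin {X Y : FGModuleCat B} (f : X ⟶ Y) : X →ₗ[k] Y where
  toFun := f
  map_add' := f.hom.hom.map_add
  map_smul' c x := by
    show f ((algebraMap k B c) • x) = (algebraMap k B c) • f x
    exact f.hom.hom.map_smul _ x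

/-- Left multiplication by an element `b` of `B` as a `k`-linear endomorphism
of a `B`-module. -/
noncomputable def bsmul (b : B) (X : FGModuleCat B) : X →ₗ[k] X where
  toFun x := b • x
  map_add' x y := by show b • (x + y) = b • x + b • y; rw [smul_add]
  map_smul' c x := by
    show b • (algebraMap k B c) • x = (algebraMap k B c) • b • x
    rw [← mul_smul, ← mul_smul, Algebra.commutes]

/-- The regular module `A`, as an object of the category of finitely generated
`A`-modules. -/
def Aself : FGModuleCat A := ⟨ModuleCat.of A A, Module.Finite.self A⟩

/-- Right multiplication `x ↦ x * a` on `A`, as a left `A`-linear map. -/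
def rmulAux (a : A) : A →ₗ[A] A where
  toFun x := x * a
  map_add' x y := add_mul x y a
  map_smul' r x := mul_assoc r x a

/-- Right multiplication `x ↦ x * a` on the regular module, a morphism of left
`A`-modules. -/
def rmul (a : A) : Aself A ⟶ Aself A := ⟨ModuleCat.ofHom (rmulAux A a)⟩

/-- The carrier of the co-regular bimodule `A* = Module.Dual k A`. -/
abbrev Coreg : Type u := Module.Dual k A

/-- The left `A`-action on `A*`, dual to the right regular action:
`(a • φ) x = φ (x * a)`. -/
noncomputable instance : SMul A (Coreg k A) :=
  ⟨fun a φ => LinearMap.comp φ (LinearMap.mulRight k a)⟩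

lemma coreg_smul_apply (a : A) (φ : Coreg k A) (x : A) :
    (a • φ : Coreg k A) x = φ (x * a) := rfl

noncomputable instance : MulAction A (Coreg k A) where
  one_smul φ := by ext x; simp [coreg_smul_apply]
  mul_smul a b φ := by ext x; simp [coreg_smul_apply, mul_assoc]

noncomputable instance : DistribMulAction A (Coreg k A) where
  smul_zero a := by ext x; simp [coreg_smul_apply]
  smul_add a φ ψ := by ext x; simp [coreg_smul_apply]

noncomputable instance : Module A (Coreg k A) where
  add_smul a b φ := by ext x; simp [coreg_smul_apply, mul_add]
  zero_smul φ := by ext x; simp [coreg_smul_apply]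

noncomputable instance : IsScalarTower k A (Coreg k A) :=
  ⟨fun c a φ => by
    ext x
    rw [coreg_smul_apply]
    show φ (x * (c • a)) = (c • (a • φ : Coreg k A)) x
    rw [Algebra.mul_smul_comm, map_smul]
    rfl⟩

noncomputable instance : Module.Finite A (Coreg k A) := by
  have : Module.Finite k (Coreg k A) := inferInstance
  exact Module.Finite.of_restrictScalars_finite k A (Coreg k A)

/-- The co-regular module `A*`, as an object of the category of finitely generated
`A`-modules (with the left action dual to the right regular action). -/
noncomputable def coreg : FGModuleCat A := ⟨ModuleCat.of A (Coreg k A), inferInstanceAs (Module.Finite A (Coreg k A))⟩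

/-- The right `A`-action `(φ · a) x = φ (a * x)` on the co-regular module `A*`,
as a left `A`-linear map. -/
noncomputable def coregRmulAux (a : A) : Coreg k A →ₗ[A] Coreg k A where
  toFun φ := LinearMap.comp φ (LinearMap.mulLeft k a)
  map_add' φ ψ := by ext x; simp
  map_smul' b φ := by
    ext x
    show ((b • φ : Coreg k A) : Module.Dual k A) (a * x) = (b • _ : Coreg k A) x
    rw [coreg_smul_apply, coreg_smul_apply]
    show φ (a * x * b) = φ (a * (x * b))
    rw [mul_assoc]

/-- The right `A`-action on the co-regular module, as a morphism of left `A`-modules. -/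
noncomputable def coregRmul (a : A) : coreg k A ⟶ coreg k A := ⟨ModuleCat.ofHom (coregRmulAux k A a)⟩

end ModulePrelim

end EW

open scoped TensorProduct

namespace EW

section PeterWeyl

variable (k : Type u) [Field k] (A : Type u) [Ring A] [Algebra k A] [FiniteDimensional k A]

noncomputable instance mfin (m : FGModuleCat A) : Module.Finite k m :=
  Module.Finite.trans A m

/-- The right `A`-action on the `m`-component `m ⊗ₖ m*` of the Peter–Weyl integrand,
through the dual factor: `(x ⊗ φ) · a = x ⊗ (φ ∘ (a • ·))`. -/
noncomputable def rT (a : A) (m : FGModuleCat A) :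
    (↥m ⊗[k] Module.Dual k ↥m) →ₗ[k] (↥m ⊗[k] Module.Dual k ↥m) :=
  TensorProduct.map LinearMap.id ((EW.bsmul k A a m).dualMap)

end PeterWeyl

end EW

open scoped TensorProduct

/-!
Both universal properties come from the Yoneda lemma for the regular module: every morphism
`A ⟶ m` is `a ↦ a • x` for a unique `x ∈ m`.  Under `m ⊗ m* ≃ End_k m`, a wedge `Z → m ⊗ m*`
is a family of natural endomorphisms of the forgetful functor, and naturality along `a ↦ a • x`
forces such an endomorphism to be the action of its value at `1 ∈ A`; this identifies the end
with `A`.  Dually, dinaturality along `a ↦ a • x` identifies the image of `x ⊗ φ` under a wedge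
`m ⊗ m* → Z` with the image of `1 ⊗ c`, where `c(a) = φ (a • x)` is the matrix coefficient of
`x ⊗ φ`; this identifies the coend with `A*`, the universal wedge being `x ⊗ φ ↦ c`.
-/

namespace EW

section Contraction

variable (k : Type u) [Field k] {M M' N P : Type*} [AddCommGroup M] [Module k M]
  [AddCommGroup M'] [Module k M'] [AddCommGroup N] [Module k N] [AddCommGroup P] [Module k P]

variable [Module.Finite k M]

noncomputable def tensorDualEquivHom : (N ⊗[k] Module.Dual k M) ≃ₗ[k] (M →ₗ[k] N) :=
  (TensorProduct.comm k N (Module.Dual k M)).trans (dualTensorHomEquiv k M N)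

@[simp]
lemma tensorDualEquivHom_tmul (x : N) (φ : Module.Dual k M) (y : M) :
    tensorDualEquivHom k (x ⊗ₜ[k] φ) y = φ y • x := by
  simp [tensorDualEquivHom]

lemma tensorDualEquivHom_map_left (f : N →ₗ[k] P) (t : N ⊗[k] Module.Dual k M) :
    tensorDualEquivHom k (TensorProduct.map f LinearMap.id t) = f ∘ₗ tensorDualEquivHom k t := by
  induction t with
  | zero => simp
  | tmul x φ => ext; simp
  | add t t' ht ht' => simp only [map_add, ht, ht', LinearMap.comp_add]

lemma tensorDualEquivHom_map_right [Module.Finite k M'] (g : M →ₗ[k] M')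
    (t : N ⊗[k] Module.Dual k M') :
    tensorDualEquivHom k (TensorProduct.map LinearMap.id g.dualMap t)
      = tensorDualEquivHom k t ∘ₗ g := by
  induction t with
  | zero => simp
  | tmul x φ => ext; simp
  | add t t' ht ht' => simp only [map_add, ht, ht', LinearMap.add_comp]

end Contraction

variable (k : Type u) [Field k] (A : Type u) [Ring A] [Algebra k A]

lemma bsmul_add (a b : A) (m : FGModuleCat.{u} A) :
    bsmul k A (a + b) m = bsmul k A a m + bsmul k A b m :=
  LinearMap.ext fun x => add_smul a b x

lemma bsmul_mul (a b : A) (m : FGModuleCat.{u} A) :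
    bsmul k A (a * b) m = bsmul k A a m ∘ₗ bsmul k A b m :=
  LinearMap.ext fun x => mul_smul a b x

lemma smul_eq_map_bsmul (a : A) (m : FGModuleCat.{u} A) {W : Type*} [AddCommGroup W]
    [Module k W] (t : ↥m ⊗[k] W) :
    a • t = TensorProduct.map (bsmul k A a m) LinearMap.id t := by
  induction t with
  | zero => simp
  | tmul x w => rfl
  | add t t' ht ht' => rw [smul_add, ht, ht', map_add]

def toA : ↥(Aself A) → A := id

def ofA : A → ↥(Aself A) := id

lemma toA_ofA (a : A) : toA A (ofA A a) = a := rfl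

def actHom (m : FGModuleCat.{u} A) (x : ↥m) : Aself A ⟶ m :=
  ⟨ModuleCat.ofHom (LinearMap.toSpanSingleton A m x)⟩

lemma klin_actHom_apply (m : FGModuleCat.{u} A) (x : ↥m) (y : ↥(Aself A)) :
    klin k A (actHom A m x) y = toA A y • x := rfl

lemma eq_smul_of_naturality (η : ∀ m : FGModuleCat.{u} A, ↥m →ₗ[k] ↥m)
    (hη : ∀ {m n : FGModuleCat.{u} A} (f : m ⟶ n), klin k A f ∘ₗ η m = η n ∘ₗ klin k A f)
    (m : FGModuleCat.{u} A) (x : ↥m) :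
    η m x = toA A (η (Aself A) (ofA A 1)) • x := by
  have h := LinearMap.congr_fun (hη (actHom A m x)) (ofA A 1)
  rw [LinearMap.comp_apply, LinearMap.comp_apply, klin_actHom_apply, klin_actHom_apply,
    toA_ofA, one_smul] at h
  exact h.symm

lemma apply_tmul_eq_of_dinatural {T : Type*}
    (j : ∀ m : FGModuleCat.{u} A, (↥m ⊗[k] Module.Dual k ↥m) → T)
    (hj : ∀ {m n : FGModuleCat.{u} A} (f : m ⟶ n) (t : ↥m ⊗[k] Module.Dual k ↥n),
      j m (TensorProduct.map LinearMap.id (klin k A f).dualMap t)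
        = j n (TensorProduct.map (klin k A f) LinearMap.id t))
    (m : FGModuleCat.{u} A) (x : ↥m) (φ : Module.Dual k ↥m) :
    j m (x ⊗ₜ[k] φ) = j (Aself A) (ofA A 1 ⊗ₜ[k] (klin k A (actHom A m x)).dualMap φ) := by
  have h := hj (actHom A m x) (ofA A 1 ⊗ₜ[k] φ)
  rw [TensorProduct.map_tmul, TensorProduct.map_tmul, klin_actHom_apply, toA_ofA, one_smul,
    LinearMap.id_apply, LinearMap.id_apply] at h
  exact h.symm

section RegularEnd

variable [FiniteDimensional k A]

lemma tensorDualEquivHom_smul (a : A) {m n : FGModuleCat.{u} A}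
    (t : ↥n ⊗[k] Module.Dual k ↥m) :
    tensorDualEquivHom k (a • t) = bsmul k A a n ∘ₗ tensorDualEquivHom k t := by
  rw [smul_eq_map_bsmul, tensorDualEquivHom_map_left]

lemma tensorDualEquivHom_rT (a : A) (m : FGModuleCat.{u} A) (t : ↥m ⊗[k] Module.Dual k ↥m) :
    tensorDualEquivHom k (rT k A a m t) = tensorDualEquivHom k t ∘ₗ bsmul k A a m :=
  tensorDualEquivHom_map_right k _ t

noncomputable def endWedge (m : FGModuleCat.{u} A) (a : A) : ↥m ⊗[k] Module.Dual k ↥m :=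
  (tensorDualEquivHom k).symm (bsmul k A a m)

@[simp]
lemma tensorDualEquivHom_endWedge (m : FGModuleCat.{u} A) (a : A) :
    tensorDualEquivHom k (endWedge k A m a) = bsmul k A a m :=
  LinearEquiv.apply_symm_apply _ _

lemma endWedge_add (m : FGModuleCat.{u} A) (x y : A) :
    endWedge k A m (x + y) = endWedge k A m x + endWedge k A m y := by
  apply (tensorDualEquivHom k).injective
  rw [map_add, tensorDualEquivHom_endWedge, tensorDualEquivHom_endWedge,
    tensorDualEquivHom_endWedge, bsmul_add]

lemma endWedge_mul (m : FGModuleCat.{u} A) (a x : A) :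
    endWedge k A m (a * x) = a • endWedge k A m x := by
  apply (tensorDualEquivHom k).injective
  rw [tensorDualEquivHom_smul, tensorDualEquivHom_endWedge, tensorDualEquivHom_endWedge,
    bsmul_mul]

lemma endWedge_mul_right (m : FGModuleCat.{u} A) (x a : A) :
    endWedge k A m (x * a) = rT k A a m (endWedge k A m x) := by
  apply (tensorDualEquivHom k).injective
  rw [tensorDualEquivHom_rT, tensorDualEquivHom_endWedge, tensorDualEquivHom_endWedge,
    bsmul_mul]

lemma endWedge_dinatural {m n : FGModuleCat.{u} A} (f : m ⟶ n) (x : A) :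
    TensorProduct.map (klin k A f) LinearMap.id (endWedge k A m x)
      = TensorProduct.map LinearMap.id (klin k A f).dualMap (endWedge k A n x) := by
  apply (tensorDualEquivHom k).injective
  rw [tensorDualEquivHom_map_left, tensorDualEquivHom_map_right, tensorDualEquivHom_endWedge,
    tensorDualEquivHom_endWedge]
  exact LinearMap.ext fun y => f.hom.hom.map_smul x y

variable {Z : Type u} [AddCommGroup Z] (j : ∀ m : FGModuleCat.{u} A, Z → ↥m ⊗[k] Module.Dual k ↥m)
  (hadd : ∀ (m : FGModuleCat.{u} A) (z z' : Z), j m (z + z') = j m z + j m z')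

noncomputable def endLift : Z →+ A :=
  AddMonoidHom.mk' (fun z => toA A (tensorDualEquivHom k (j (Aself A) z) (ofA A 1))) fun z z' => by
    rw [hadd, map_add, LinearMap.add_apply]
    rfl

lemma endLift_apply (z : Z) :
    endLift k A j hadd z = toA A (tensorDualEquivHom k (j (Aself A) z) (ofA A 1)) := rfl

lemma tensorDualEquivHom_eq_endLift_smul
    (hdin : ∀ {m n : FGModuleCat.{u} A} (f : m ⟶ n) (z : Z),
      TensorProduct.map (klin k A f) LinearMap.id (j m z)
        = TensorProduct.map LinearMap.id (klin k A f).dualMap (j n z))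
    (m : FGModuleCat.{u} A) (z : Z) (x : ↥m) :
    tensorDualEquivHom k (j m z) x = endLift k A j hadd z • x :=
  eq_smul_of_naturality k A (fun m => tensorDualEquivHom k (j m z))
    (fun f => by rw [← tensorDualEquivHom_map_left, hdin, tensorDualEquivHom_map_right]) m x

lemma endLift_smul [Module A Z]
    (hsmul : ∀ (m : FGModuleCat.{u} A) (a : A) (z : Z), j m (a • z) = a • j m z)
    (a : A) (z : Z) :
    endLift k A j hadd (a • z) = a * endLift k A j hadd z := by
  rw [endLift_apply, hsmul, tensorDualEquivHom_smul]
  rfl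

lemma endLift_op_smul [Module Aᵐᵒᵖ Z]
    (hop : ∀ (m : FGModuleCat.{u} A) (a : A) (z : Z),
      j m (MulOpposite.op a • z) = rT k A a m (j m z))
    (hdin : ∀ {m n : FGModuleCat.{u} A} (f : m ⟶ n) (z : Z),
      TensorProduct.map (klin k A f) LinearMap.id (j m z)
        = TensorProduct.map LinearMap.id (klin k A f).dualMap (j n z))
    (a : A) (z : Z) :
    endLift k A j hadd (MulOpposite.op a • z) = endLift k A j hadd z * a := by
  rw [endLift_apply, hop, tensorDualEquivHom_rT, LinearMap.comp_apply,
    tensorDualEquivHom_eq_endLift_smul k A j hadd hdin]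
  show endLift k A j hadd z * (a * 1) = _
  rw [mul_one]

lemma endWedge_endLift
    (hdin : ∀ {m n : FGModuleCat.{u} A} (f : m ⟶ n) (z : Z),
      TensorProduct.map (klin k A f) LinearMap.id (j m z)
        = TensorProduct.map LinearMap.id (klin k A f).dualMap (j n z))
    (m : FGModuleCat.{u} A) (z : Z) :
    endWedge k A m (endLift k A j hadd z) = j m z := by
  apply (tensorDualEquivHom k).injective
  ext x
  rw [tensorDualEquivHom_endWedge, tensorDualEquivHom_eq_endLift_smul k A j hadd hdin]
  rfl

lemma eq_endLift (κ : Z →+ A)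
    (hκ : ∀ (m : FGModuleCat.{u} A) (z : Z), endWedge k A m (κ z) = j m z) :
    κ = endLift k A j hadd := by
  ext z
  rw [endLift_apply, ← hκ, tensorDualEquivHom_endWedge]
  exact (mul_one _).symm

end RegularEnd

section CoregularCoend

noncomputable def matrixCoeff (m : FGModuleCat.{u} A) :
    (↥m ⊗[k] Module.Dual k ↥m) →ₗ[k] Coreg k A :=
  TensorProduct.lift <| LinearMap.mk₂ k
    (fun x φ => φ ∘ₗ (LinearMap.toSpanSingleton A m x).restrictScalars k)
    (fun x y φ => by ext a; simp)
    (fun c x φ => by ext a; simp [smul_comm a c x])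
    (fun x φ ψ => rfl)
    (fun c x φ => rfl)

lemma matrixCoeff_tmul (m : FGModuleCat.{u} A) (x : ↥m) (φ : Module.Dual k ↥m) (a : A) :
    matrixCoeff k A m (x ⊗ₜ[k] φ) a = φ (a • x) := rfl

lemma matrixCoeff_dinatural {m n : FGModuleCat.{u} A} (f : m ⟶ n)
    (t : ↥m ⊗[k] Module.Dual k ↥n) :
    matrixCoeff k A m (TensorProduct.map LinearMap.id (klin k A f).dualMap t)
      = matrixCoeff k A n (TensorProduct.map (klin k A f) LinearMap.id t) := by
  induction t with
  | zero => rw [map_zero, map_zero, map_zero, map_zero]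
  | tmul x φ =>
      ext a
      exact congrArg φ (f.hom.hom.map_smul a x)
  | add t t' ht ht' => simp only [map_add, ht, ht']

-- `Coreg k A` and `Module.Dual k (Aself A)` differ by the `k`-module structure on `A`.
noncomputable def coregToDual (φ : Coreg k A) : Module.Dual k ↥(Aself A) where
  toFun a := φ (toA A a)
  map_add' := φ.map_add
  map_smul' c a := by
    show φ (algebraMap k A c * toA A a) = c • φ (toA A a)
    rw [← Algebra.smul_def, map_smul]

lemma coregToDual_add (φ ψ : Coreg k A) :
    coregToDual k A (φ + ψ) = coregToDual k A φ + coregToDual k A ψ := rfl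

lemma coregToDual_matrixCoeff_tmul (m : FGModuleCat.{u} A) (x : ↥m) (φ : Module.Dual k ↥m) :
    coregToDual k A (matrixCoeff k A m (x ⊗ₜ[k] φ)) = (klin k A (actHom A m x)).dualMap φ := rfl

lemma matrixCoeff_one_tmul (φ : Coreg k A) :
    matrixCoeff k A (Aself A) (ofA A 1 ⊗ₜ[k] coregToDual k A φ) = φ := by
  ext a
  exact congrArg φ (mul_one a)

variable {Z : Type u} [AddCommGroup Z]
  (j : ∀ m : FGModuleCat.{u} A, (↥m ⊗[k] Module.Dual k ↥m) → Z)
  (hadd : ∀ (m : FGModuleCat.{u} A) (t t' : ↥m ⊗[k] Module.Dual k ↥m),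
    j m (t + t') = j m t + j m t')

noncomputable def coendLift : Coreg k A →+ Z :=
  AddMonoidHom.mk' (fun φ => j (Aself A) (ofA A 1 ⊗ₜ[k] coregToDual k A φ)) fun φ ψ => by
    rw [coregToDual_add, TensorProduct.tmul_add, hadd]

lemma coendLift_apply (φ : Coreg k A) :
    coendLift k A j hadd φ = j (Aself A) (ofA A 1 ⊗ₜ[k] coregToDual k A φ) := rfl

lemma matrixCoeff_smul [FiniteDimensional k A] (m : FGModuleCat.{u} A) (a : A)
    (t : ↥m ⊗[k] Module.Dual k ↥m) :
    matrixCoeff k A m (a • t) = a • matrixCoeff k A m t := by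
  induction t with
  | zero => rw [smul_zero, map_zero, smul_zero]
  | tmul x φ =>
      ext b
      rw [TensorProduct.smul_tmul', matrixCoeff_tmul, coreg_smul_apply, matrixCoeff_tmul, mul_smul]
  | add t t' ht ht' => rw [smul_add, map_add, ht, ht', map_add, smul_add]

lemma matrixCoeff_rT [FiniteDimensional k A] (m : FGModuleCat.{u} A) (a : A)
    (t : ↥m ⊗[k] Module.Dual k ↥m) :
    matrixCoeff k A m (rT k A a m t) = coregRmulAux k A a (matrixCoeff k A m t) := by
  induction t with
  | zero => rw [map_zero, map_zero, map_zero]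
  | tmul x φ =>
      ext b
      exact congrArg φ (mul_smul a b x).symm
  | add t t' ht ht' => rw [map_add, map_add, ht, ht', map_add, map_add]

lemma coregToDual_coregRmulAux [FiniteDimensional k A] (a : A) (φ : Coreg k A) :
    coregToDual k A (coregRmulAux k A a φ)
      = (bsmul k A a (Aself A)).dualMap (coregToDual k A φ) := rfl

lemma coendLift_smul [Module A Z]
    (hsmul : ∀ (m : FGModuleCat.{u} A) (a : A) (t : ↥m ⊗[k] Module.Dual k ↥m),
      j m (a • t) = a • j m t)
    (hdin : ∀ {m n : FGModuleCat.{u} A} (f : m ⟶ n) (t : ↥m ⊗[k] Module.Dual k ↥n),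
      j m (TensorProduct.map LinearMap.id (klin k A f).dualMap t)
        = j n (TensorProduct.map (klin k A f) LinearMap.id t))
    (a : A) (φ : Coreg k A) :
    coendLift k A j hadd (a • φ) = a • coendLift k A j hadd φ := by
  rw [coendLift_apply, coendLift_apply, ← hsmul, TensorProduct.smul_tmul']
  have h : a • ofA A 1 = ofA A a := congrArg (ofA A) (mul_one a)
  rw [h, apply_tmul_eq_of_dinatural k A j hdin (Aself A) (ofA A a)]
  rfl

lemma coendLift_coregRmulAux [FiniteDimensional k A] [Module Aᵐᵒᵖ Z]
    (hop : ∀ (m : FGModuleCat.{u} A) (a : A) (t : ↥m ⊗[k] Module.Dual k ↥m),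
      j m (rT k A a m t) = MulOpposite.op a • j m t)
    (a : A) (φ : Coreg k A) :
    coendLift k A j hadd (coregRmulAux k A a φ) = MulOpposite.op a • coendLift k A j hadd φ := by
  rw [coendLift_apply, coendLift_apply, coregToDual_coregRmulAux, ← hop]
  rfl

lemma coendLift_matrixCoeff
    (hdin : ∀ {m n : FGModuleCat.{u} A} (f : m ⟶ n) (t : ↥m ⊗[k] Module.Dual k ↥n),
      j m (TensorProduct.map LinearMap.id (klin k A f).dualMap t)
        = j n (TensorProduct.map (klin k A f) LinearMap.id t))
    (m : FGModuleCat.{u} A) (t : ↥m ⊗[k] Module.Dual k ↥m) :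
    coendLift k A j hadd (matrixCoeff k A m t) = j m t := by
  induction t with
  | zero => rw [map_zero, map_zero, eq_comm]; simpa using hadd m 0 0
  | tmul x φ =>
      rw [coendLift_apply, coregToDual_matrixCoeff_tmul, apply_tmul_eq_of_dinatural k A j hdin m]
  | add t t' ht ht' => rw [map_add, map_add, hadd, ht, ht']

lemma eq_coendLift (κ : Coreg k A →+ Z)
    (hκ : ∀ (m : FGModuleCat.{u} A) (t : ↥m ⊗[k] Module.Dual k ↥m),
      κ (matrixCoeff k A m t) = j m t) :
    κ = coendLift k A j hadd := by
  ext φ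
  rw [coendLift_apply, ← hκ, matrixCoeff_one_tmul]

end CoregularCoend

end EW

/-- **Peter–Weyl for the (co)regular bimodule.**
For any finite-dimensional `k`-algebra `A`, the end `∫_{m ∈ A-Mod} m ⊗ₖ m*` of the
bifunctor `(m, n) ↦ m ⊗ₖ n*` (valued in `A`-bimodules) is isomorphic, as an `A`-bimodule,
to the regular bimodule `A`; and the coend `∫^{m ∈ A-Mod} m ⊗ₖ m*` is isomorphic, as an
`A`-bimodule, to the co-regular bimodule `A*`.  This is expressed by exhibiting the
regular bimodule `A` as an end (universal wedge `i`) and the co-regular bimodule `A*` as a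
coend (universal wedge `ic`), where wedges from/to a test `A`-bimodule `Z` are dinatural
families of bimodule maps, the left `A`-action on `m ⊗ₖ m*` is on the first factor and the
right `A`-action `EW.rT` on the second. -/
theorem statement_3 (k : Type u) [Field k]
    (A : Type u) [Ring A] [Algebra k A] [FiniteDimensional k A] :
    (∃ i : ∀ m : FGModuleCat.{u} A, A → (↥m ⊗[k] Module.Dual k ↥m),
      (∀ (m : FGModuleCat.{u} A) (x y : A), i m (x + y) = i m x + i m y) ∧
      (∀ (m : FGModuleCat.{u} A) (a x : A), i m (a * x) = a • i m x) ∧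
      (∀ (m : FGModuleCat.{u} A) (x a : A), i m (x * a) = EW.rT k A a m (i m x)) ∧
      (∀ {m n : FGModuleCat.{u} A} (f : m ⟶ n) (x : A),
        TensorProduct.map (EW.klin k A f) LinearMap.id (i m x)
          = TensorProduct.map LinearMap.id ((EW.klin k A f).dualMap) (i n x)) ∧
      (∀ (Z : Type u) [AddCommGroup Z] [Module A Z] [Module Aᵐᵒᵖ Z]
          [SMulCommClass A Aᵐᵒᵖ Z]
        (j : ∀ m : FGModuleCat.{u} A, Z → (↥m ⊗[k] Module.Dual k ↥m)),
        (∀ (m : FGModuleCat.{u} A) (z z' : Z), j m (z + z') = j m z + j m z') →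
        (∀ (m : FGModuleCat.{u} A) (a : A) (z : Z), j m (a • z) = a • j m z) →
        (∀ (m : FGModuleCat.{u} A) (a : A) (z : Z), j m ((MulOpposite.op a) • z) = EW.rT k A a m (j m z)) →
        (∀ {m n : FGModuleCat.{u} A} (f : m ⟶ n) (z : Z),
          TensorProduct.map (EW.klin k A f) LinearMap.id (j m z)
            = TensorProduct.map LinearMap.id ((EW.klin k A f).dualMap) (j n z)) →
        ∃! κ : Z →+ A, (∀ (a : A) (z : Z), κ (a • z) = a * κ z) ∧
          (∀ (a : A) (z : Z), κ ((MulOpposite.op a) • z) = κ z * a) ∧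
          (∀ (m : FGModuleCat.{u} A) (z : Z), i m (κ z) = j m z))) ∧
    (∃ ic : ∀ m : FGModuleCat.{u} A, (↥m ⊗[k] Module.Dual k ↥m) → EW.Coreg k A,
      (∀ (m : FGModuleCat.{u} A) (t t' : ↥m ⊗[k] Module.Dual k ↥m), ic m (t + t') = ic m t + ic m t') ∧
      (∀ (m : FGModuleCat.{u} A) (a : A) (t : ↥m ⊗[k] Module.Dual k ↥m), ic m (a • t) = a • ic m t) ∧
      (∀ (m : FGModuleCat.{u} A) (a : A) (t : ↥m ⊗[k] Module.Dual k ↥m),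
        ic m (EW.rT k A a m t) = EW.coregRmulAux k A a (ic m t)) ∧
      (∀ {m n : FGModuleCat.{u} A} (f : m ⟶ n) (t : ↥m ⊗[k] Module.Dual k ↥n),
        ic m (TensorProduct.map LinearMap.id ((EW.klin k A f).dualMap) t)
          = ic n (TensorProduct.map (EW.klin k A f) LinearMap.id t)) ∧
      (∀ (Z : Type u) [AddCommGroup Z] [Module A Z] [Module Aᵐᵒᵖ Z]
          [SMulCommClass A Aᵐᵒᵖ Z]
        (j : ∀ m : FGModuleCat.{u} A, (↥m ⊗[k] Module.Dual k ↥m) → Z),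
        (∀ (m : FGModuleCat.{u} A) (t t' : ↥m ⊗[k] Module.Dual k ↥m), j m (t + t') = j m t + j m t') →
        (∀ (m : FGModuleCat.{u} A) (a : A) (t : ↥m ⊗[k] Module.Dual k ↥m), j m (a • t) = a • j m t) →
        (∀ (m : FGModuleCat.{u} A) (a : A) (t : ↥m ⊗[k] Module.Dual k ↥m),
          j m (EW.rT k A a m t) = (MulOpposite.op a) • j m t) →
        (∀ {m n : FGModuleCat.{u} A} (f : m ⟶ n) (t : ↥m ⊗[k] Module.Dual k ↥n),
          j m (TensorProduct.map LinearMap.id ((EW.klin k A f).dualMap) t)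
            = j n (TensorProduct.map (EW.klin k A f) LinearMap.id t)) →
        ∃! κ : EW.Coreg k A →+ Z,
          (∀ (a : A) (φ : EW.Coreg k A), κ (a • φ) = a • κ φ) ∧
          (∀ (a : A) (φ : EW.Coreg k A),
            κ (EW.coregRmulAux k A a φ) = (MulOpposite.op a) • κ φ) ∧
          (∀ (m : FGModuleCat.{u} A) (t : ↥m ⊗[k] Module.Dual k ↥m), κ (ic m t) = j m t))) := by
  refine ⟨⟨EW.endWedge k A, EW.endWedge_add k A, EW.endWedge_mul k A, EW.endWedge_mul_right k A,
      fun f x => EW.endWedge_dinatural k A f x, ?_⟩,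
    ⟨fun m => EW.matrixCoeff k A m, fun m => map_add (EW.matrixCoeff k A m),
      EW.matrixCoeff_smul k A, EW.matrixCoeff_rT k A, fun f t => EW.matrixCoeff_dinatural k A f t,
      ?_⟩⟩
  · intro Z _ _ _ _ j hadd hsmul hop hdin
    exact ⟨EW.endLift k A j hadd,
      ⟨EW.endLift_smul k A j hadd hsmul, EW.endLift_op_smul k A j hadd hop hdin,
        EW.endWedge_endLift k A j hadd hdin⟩,
      fun κ hκ => EW.eq_endLift k A j hadd κ hκ.2.2⟩
  · intro Z _ _ _ _ j hadd hsmul hop hdin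
    exact ⟨EW.coendLift k A j hadd,
      ⟨EW.coendLift_smul k A j hadd hsmul hdin, EW.coendLift_coregRmulAux k A j hadd hop,
        EW.coendLift_matrixCoeff k A j hadd hdin⟩,
      fun κ hκ => EW.eq_coendLift k A j hadd κ hκ.2.2⟩
end

section
/- Let A and C be finite k-linear categories and F : A → C a k-linear functor. Then there is a natural isomorphism ∫_{a ∈ A} Hom_A(-, a)* ⊗ F(a) ≅ F of linear functors, where Hom_A(-, a)* denotes the k-linear dual of the Hom space (the Yoneda/convolution property of the dual Hom functor). -/
open CategoryTheory CategoryTheory.Limits Opposite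

universe w v u v₁ u₁ v₂ u₂ v₃ u₃ v₄ u₄

namespace CategoryTheory.Functor

theorem existsUnique_comp_map_of_natural {A : Type u₁} [Category.{v₁} A]
    {C : Type u₂} [Category.{v₂} C] (F : A ⥤ C) {x : A} {d : C}
    (θ : ∀ a : A, (x ⟶ a) → (d ⟶ F.obj a))
    (hθ : ∀ {a b : A} (f : a ⟶ b) (g : x ⟶ a), θ b (g ≫ f) = θ a g ≫ F.map f) :
    ∃! κ : d ⟶ F.obj x, ∀ (a : A) (g : x ⟶ a), θ a g = κ ≫ F.map g := by
  refine ⟨θ x (𝟙 x), fun a g => ?_, fun κ hκ => ?_⟩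
  · simpa using hθ g (𝟙 x)
  · simpa using (hκ x (𝟙 x)).symm

end CategoryTheory.Functor

theorem statement_5_general (k : Type u) [Field k]
    {A : Type u₁} [Category.{v₁} A] [Preadditive A] [CategoryTheory.Linear k A]
    {C : Type u₂} [Category.{v₂} C] [Preadditive C] [CategoryTheory.Linear k C]
    (F : A ⥤ C) (x : A) (d : C)
    (θ : ∀ a : A, (x ⟶ a) →ₗ[k] (d ⟶ F.obj a))
    (hθ : ∀ {a b : A} (f : a ⟶ b) (g : x ⟶ a), θ b (g ≫ f) = θ a g ≫ F.map f) :
    ∃! κ : d ⟶ F.obj x, ∀ (a : A) (g : x ⟶ a), θ a g = κ ≫ F.map g :=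
  F.existsUnique_comp_map_of_natural (fun a => θ a) hθ

/-- **convolution property of the dual Hom functor.**
Let `A` and `C` be finite `k`-linear categories and `F : A ⥤ C` a `k`-linear functor.  Then
there is a natural isomorphism `∫_{a ∈ A} Hom_A(-, a)* ⊗ F(a) ≅ F` of linear functors.
For every `x ∈ A` the object `F.obj x` is the end `∫_{a} Hom_A(x,a)* ⊗ F(a)`:  morphisms
`d ⟶ Hom_A(x,a)* ⊗ F(a)` are identified with linear maps `Hom_A(x,a) →ₗ[k] (d ⟶ F(a))`,
so a dinatural family into the integrand from `d` is a family `θ` as below, and the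
assertion is that every such family factors uniquely through the canonical family
`g ↦ F.map g` via a morphism `κ : d ⟶ F.obj x`. -/
theorem statement_5 (k : Type u) [Field k]
    {A : Type u₁} [Category.{v₁} A] [Preadditive A] [CategoryTheory.Linear k A]
    {C : Type u₂} [Category.{v₂} C] [Preadditive C] [CategoryTheory.Linear k C]
    [EW.IsFiniteLinear k A] [EW.IsFiniteLinear k C]
    (F : A ⥤ C) [F.Additive] [F.Linear k] (x : A) (d : C)
    (θ : ∀ a : A, (x ⟶ a) →ₗ[k] (d ⟶ F.obj a))
    (hθ : ∀ {a b : A} (f : a ⟶ b) (g : x ⟶ a), θ b (g ≫ f) = θ a g ≫ F.map f) :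
    ∃! κ : d ⟶ F.obj x, ∀ (a : A) (g : x ⟶ a), θ a g = κ ≫ F.map g :=
  statement_5_general k F x d θ hθ
end

section
/- Let A and C be finite k-linear categories. For a left exact functor F : A → C with left adjoint F^l, there is an isomorphism of coends ∫^{a ∈ A} ā ⊠ F(a) ≅ ∫^{c ∈ C} (F^l(c))‾ ⊠ c in A^op ⊠ C; dually, for a right exact functor G with right adjoint G^r, there is an isomorphism of ends ∫_{a ∈ A} ā ⊠ G(a) ≅ ∫_{c ∈ C} (G^r(c))‾ ⊠ c. -/
open CategoryTheory CategoryTheory.Limits Opposite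

universe w v u v₁ u₁ v₂ u₂ v₃ u₃ v₄ u₄

/-!
Both coends corepresent the same functor of `z`. Precomposing with the counit,
`θ ↦ (a ↦ (ε_a)‾ ⊠ F(a) ≫ θ_{F a})`, turns dinatural families out of `(F^l c)‾ ⊠ c`
into dinatural families out of `ā ⊠ F(a)`; precomposing with the unit goes back, and the
triangle identities make the two transfers mutually inverse. An end in `D` is a coend in
`Dᵒᵖ` of the bifunctor `(c, a) ↦ ā ⊠ c`, with the roles of `A` and `C` exchanged, so the
statement about ends is the one about coends for the adjunction `G ⊣ G^r`.
-/

namespace EW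

section Cowedges

variable {A : Type u₁} [Category.{v₁} A] {C : Type u₂} [Category.{v₂} C]
  {D : Type u₃} [Category.{v₃} D] {J : Type u₄} [Category.{v₄} J]

def IsBoxCowedge (box : Aᵒᵖ ⥤ C ⥤ D) (Lf : J ⥤ A) (Rf : J ⥤ C) {z : D}
    (θ : ∀ j : J, (box.obj (op (Lf.obj j))).obj (Rf.obj j) ⟶ z) : Prop :=
  ∀ {j j' : J} (f : j ⟶ j'),
    (box.map (Lf.map f).op).app (Rf.obj j) ≫ θ j
      = (box.obj (op (Lf.obj j'))).map (Rf.map f) ≫ θ j'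

variable {box : Aᵒᵖ ⥤ C ⥤ D} {Lf : J ⥤ A} {Rf : J ⥤ C}

theorem IsBoxCowedge.comp {z z' : D}
    {θ : ∀ j : J, (box.obj (op (Lf.obj j))).obj (Rf.obj j) ⟶ z}
    (hθ : IsBoxCowedge box Lf Rf θ) (g : z ⟶ z') :
    IsBoxCowedge box Lf Rf fun j => θ j ≫ g := fun f => by
  simp only [← Category.assoc, hθ f]

namespace BoxCoend

variable (E : BoxCoend box Lf Rf)

theorem isBoxCowedge_ι : IsBoxCowedge box Lf Rf E.ι := E.dinat

noncomputable def desc {z : D} (θ : ∀ j : J, (box.obj (op (Lf.obj j))).obj (Rf.obj j) ⟶ z)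
    (hθ : IsBoxCowedge box Lf Rf θ) : E.pt ⟶ z :=
  (E.universal z θ hθ).exists.choose

@[simp]
theorem ι_desc {z : D} (θ : ∀ j : J, (box.obj (op (Lf.obj j))).obj (Rf.obj j) ⟶ z)
    (hθ : IsBoxCowedge box Lf Rf θ) (j : J) : E.ι j ≫ E.desc θ hθ = θ j :=
  (E.universal z θ hθ).exists.choose_spec j

theorem hom_ext {z : D} {g g' : E.pt ⟶ z} (h : ∀ j, E.ι j ≫ g = E.ι j ≫ g') : g = g' :=
  (E.universal z _ (IsBoxCowedge.comp E.isBoxCowedge_ι g')).unique h fun _ => rfl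

end BoxCoend

end Cowedges

section Adjunction

variable {A : Type u₁} [Category.{v₁} A] {C : Type u₂} [Category.{v₂} C]
  {D : Type u₃} [Category.{v₃} D] {box : Aᵒᵖ ⥤ C ⥤ D} {F : A ⥤ C} {Fl : C ⥤ A}
  (adj : Fl ⊣ F) {z : D}

def pullCounit (θ : ∀ c : C, (box.obj (op (Fl.obj c))).obj c ⟶ z) (a : A) :
    (box.obj (op a)).obj (F.obj a) ⟶ z :=
  (box.map (adj.counit.app a).op).app (F.obj a) ≫ θ (F.obj a)

def pushUnit (θ : ∀ a : A, (box.obj (op a)).obj (F.obj a) ⟶ z) (c : C) :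
    (box.obj (op (Fl.obj c))).obj c ⟶ z :=
  (box.obj (op (Fl.obj c))).map (adj.unit.app c) ≫ θ (Fl.obj c)

variable {adj}

theorem isBoxCowedge_pullCounit {θ : ∀ c : C, (box.obj (op (Fl.obj c))).obj c ⟶ z}
    (hθ : IsBoxCowedge box Fl (𝟭 C) θ) : IsBoxCowedge box (𝟭 A) F (pullCounit adj θ) := by
  intro a a' f
  have hnat := (box.map (adj.counit.app a').op).naturality (F.map f)
  have h := hθ (F.map f)
  simp only [Functor.id_obj, Functor.id_map, Functor.comp_obj] at h hnat ⊢
  rw [pullCounit, pullCounit, reassoc_of% hnat, ← h]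
  simp only [← NatTrans.comp_app_assoc, ← Functor.map_comp, ← op_comp,
    Adjunction.counit_naturality]

theorem isBoxCowedge_pushUnit {θ : ∀ a : A, (box.obj (op a)).obj (F.obj a) ⟶ z}
    (hθ : IsBoxCowedge box (𝟭 A) F θ) : IsBoxCowedge box Fl (𝟭 C) (pushUnit adj θ) := by
  intro c c' g
  have hnat := (box.map (Fl.map g).op).naturality (adj.unit.app c)
  have h := hθ (Fl.map g)
  simp only [Functor.id_obj, Functor.id_map, Functor.comp_obj] at h hnat ⊢
  rw [pushUnit, pushUnit, ← reassoc_of% hnat, h, ← Functor.map_comp_assoc,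
    ← Functor.map_comp_assoc, adj.unit_naturality]

theorem pushUnit_pullCounit {θ : ∀ c : C, (box.obj (op (Fl.obj c))).obj c ⟶ z}
    (hθ : IsBoxCowedge box Fl (𝟭 C) θ) : pushUnit adj (pullCounit adj θ) = θ := by
  funext c
  have hnat := (box.map (adj.counit.app (Fl.obj c)).op).naturality (adj.unit.app c)
  have h := hθ (adj.unit.app c)
  simp only [Functor.id_obj, Functor.id_map, Functor.comp_obj] at h hnat
  rw [pushUnit, pullCounit, reassoc_of% hnat, ← h, ← NatTrans.comp_app_assoc,
    ← Functor.map_comp, ← op_comp, adj.left_triangle_components, op_id,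
    CategoryTheory.Functor.map_id, NatTrans.id_app, Category.id_comp]

theorem pullCounit_pushUnit {θ : ∀ a : A, (box.obj (op a)).obj (F.obj a) ⟶ z}
    (hθ : IsBoxCowedge box (𝟭 A) F θ) : pullCounit adj (pushUnit adj θ) = θ := by
  funext a
  have hnat := (box.map (adj.counit.app a).op).naturality (adj.unit.app (F.obj a))
  have h := hθ (adj.counit.app a)
  simp only [Functor.id_obj, Functor.id_map, Functor.comp_obj] at h hnat
  rw [pullCounit, pushUnit, ← reassoc_of% hnat, h, ← Functor.map_comp_assoc,
    adj.right_triangle_components, CategoryTheory.Functor.map_id, Category.id_comp]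

variable (adj) in
noncomputable def BoxCoend.isoOfAdjunction (E₁ : BoxCoend box (𝟭 A) F)
    (E₂ : BoxCoend box Fl (𝟭 C)) : E₁.pt ≅ E₂.pt where
  hom := E₁.desc (pullCounit adj E₂.ι) (isBoxCowedge_pullCounit E₂.isBoxCowedge_ι)
  inv := E₂.desc (pushUnit adj E₁.ι) (isBoxCowedge_pushUnit E₁.isBoxCowedge_ι)
  hom_inv_id := E₁.hom_ext fun a => by
    rw [Category.comp_id, ← Category.assoc, ι_desc, pullCounit, Category.assoc, ι_desc]
    exact congrFun (pullCounit_pushUnit E₁.isBoxCowedge_ι) a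
  inv_hom_id := E₂.hom_ext fun c => by
    rw [Category.comp_id, ← Category.assoc, ι_desc, pushUnit, Category.assoc, ι_desc]
    exact congrFun (pushUnit_pullCounit E₂.isBoxCowedge_ι) c

end Adjunction

section Duality

variable {A : Type u₁} [Category.{v₁} A] {C : Type u₂} [Category.{v₂} C]
  {D : Type u₃} [Category.{v₃} D]

def dualBox (box : Aᵒᵖ ⥤ C ⥤ D) : Cᵒᵖ ⥤ A ⥤ Dᵒᵖ where
  obj c :=
    { obj a := op ((box.obj (op a)).obj c.unop)
      map f := ((box.map f.op).app c.unop).op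
      map_id a := by simp
      map_comp f g := by simp }
  map g :=
    { app a := ((box.obj (op a)).map g.unop).op
      naturality a a' f := by rw [← op_comp, ← op_comp, NatTrans.naturality] }
  map_id c := by ext; simp
  map_comp g g' := by ext; simp [← op_comp]

def BoxEnd.toBoxCoend {box : Aᵒᵖ ⥤ C ⥤ D} {J : Type u₄} [Category.{v₄} J] {Lf : J ⥤ A}
    {Rf : J ⥤ C} (E : BoxEnd box Lf Rf) : BoxCoend (dualBox box) Rf Lf where
  pt := op E.pt
  ι j := (E.π j).op
  dinat f := Quiver.Hom.unop_inj (E.dinat f)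
  universal z θ hθ := by
    obtain ⟨κ, hκ, hκ_unique⟩ := E.universal z.unop (fun j => (θ j).unop)
      fun f => Quiver.Hom.op_inj (hθ f)
    exact ⟨κ.op, fun j => Quiver.Hom.unop_inj (hκ j),
      fun κ' hκ' =>
        Quiver.Hom.unop_inj (hκ_unique κ'.unop fun j => Quiver.Hom.op_inj (hκ' j))⟩

noncomputable def BoxEnd.isoOfAdjunction {box : Aᵒᵖ ⥤ C ⥤ D} {G : A ⥤ C} {Gr : C ⥤ A}
    (adj : G ⊣ Gr) (E₃ : BoxEnd box (𝟭 A) G) (E₄ : BoxEnd box Gr (𝟭 C)) :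
    E₃.pt ≅ E₄.pt :=
  (BoxCoend.isoOfAdjunction adj E₄.toBoxCoend E₃.toBoxCoend).unop

end Duality

end EW

theorem statement_10_general
    {A : Type u₁} [Category.{v₁} A]
    {C : Type u₂} [Category.{v₂} C]
    {D : Type u₃} [Category.{v₃} D]
    (box : Aᵒᵖ ⥤ C ⥤ D)
    (F : A ⥤ C)
    (Fl : C ⥤ A) (adjF : Fl ⊣ F)
    (G : A ⥤ C)
    (Gr : C ⥤ A) (adjG : G ⊣ Gr)
    (E₁ : EW.BoxCoend box (𝟭 A) F) (E₂ : EW.BoxCoend box Fl (𝟭 C))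
    (E₃ : EW.BoxEnd box (𝟭 A) G) (E₄ : EW.BoxEnd box Gr (𝟭 C)) :
    Nonempty (E₁.pt ≅ E₂.pt) ∧ Nonempty (E₃.pt ≅ E₄.pt) :=
  ⟨⟨EW.BoxCoend.isoOfAdjunction adjF E₁ E₂⟩,
    ⟨EW.BoxEnd.isoOfAdjunction adjG E₃ E₄⟩⟩

/-- Let `A`, `C` be finite `k`-linear categories and let `(D, box)` be
(a model of) the Deligne product `Aᵒᵖ ⊠ C`.  For a left exact linear functor `F : A ⥤ C`
with left adjoint `F^l`, any coend `∫^{a ∈ A} ā ⊠ F(a)` is isomorphic to any coend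
`∫^{c ∈ C} (F^l(c))‾ ⊠ c`; dually, for a right exact linear functor `G : A ⥤ C` with
right adjoint `G^r`, any end `∫_{a ∈ A} ā ⊠ G(a)` is isomorphic to any end
`∫_{c ∈ C} (G^r(c))‾ ⊠ c`. -/
theorem statement_10 (k : Type u) [Field k]
    {A : Type u₁} [Category.{v₁} A] [Preadditive A] [CategoryTheory.Linear k A]
    {C : Type u₂} [Category.{v₂} C] [Preadditive C] [CategoryTheory.Linear k C]
    {D : Type u₃} [Category.{v₃} D] [Preadditive D] [CategoryTheory.Linear k D]
    [EW.IsFiniteLinear k A] [EW.IsFiniteLinear k C]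
    (box : Aᵒᵖ ⥤ C ⥤ D) [EW.IsDeligneProduct k box]
    (F : A ⥤ C) [F.Additive] [F.Linear k] [PreservesFiniteLimits F]
    (Fl : C ⥤ A) (adjF : Fl ⊣ F)
    (G : A ⥤ C) [G.Additive] [G.Linear k] [PreservesFiniteColimits G]
    (Gr : C ⥤ A) (adjG : G ⊣ Gr)
    (E₁ : EW.BoxCoend box (𝟭 A) F) (E₂ : EW.BoxCoend box Fl (𝟭 C))
    (E₃ : EW.BoxEnd box (𝟭 A) G) (E₄ : EW.BoxEnd box Gr (𝟭 C)) :
    Nonempty (E₁.pt ≅ E₂.pt) ∧ Nonempty (E₃.pt ≅ E₄.pt) :=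
  statement_10_general box F Fl adjF G Gr adjG E₁ E₂ E₃ E₄
end

section
/- For any finite k-linear category X, the Nakayama functor Π_X = ∫^{x} Hom_X(-, x)* ⊗ x is left adjoint to the left exact Nakayama functor Π̄_X = ∫_{x} Hom_X(x, -) ⊗ x. -/
open CategoryTheory CategoryTheory.Limits Opposite

universe w v u v₁ u₁ v₂ u₂ v₃ u₃ v₄ u₄

/-!
Both functors are determined by their universal properties: a morphism `Π_X a ⟶ b` is a
dinatural family `Hom(a, x)* → Hom(x, b)`, and a morphism `a ⟶ Π̄_X b` is a dinatural family
`Hom(x, b)* → Hom(a, x)`. Since all Hom spaces of a finite linear category are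
finite-dimensional, transposing a linear map `V* → W` to `W* → V` is an involution, and it
exchanges the two dinaturality conditions. This gives the natural bijection
`Hom(Π_X a, b) ≃ Hom(a, Π̄_X b)`.
-/

namespace EW

lemma FGModuleCat.finiteDimensional_hom (k : Type u) [Field k] (A : Type u) [Ring A]
    [Algebra k A] [FiniteDimensional k A] (M N : FGModuleCat.{u} A) :
    FiniteDimensional k (M ⟶ N) := by
  let := ModuleCat.moduleOfAlgebraModule (k := k) M.obj
  have := ModuleCat.isScalarTower_of_algebra_moduleCat (k := k) M.obj
  let := ModuleCat.moduleOfAlgebraModule (k := k) N.obj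
  have := ModuleCat.isScalarTower_of_algebra_moduleCat (k := k) N.obj
  have := M.property
  have := N.property
  have : Module.Finite k M.obj := Module.Finite.trans A M.obj
  have : Module.Finite k N.obj := Module.Finite.trans A N.obj
  let restrict : (M ⟶ N) →ₗ[k] (M.obj →ₗ[k] N.obj) :=
    { toFun := fun f => f.hom.hom.restrictScalars k
      map_add' := fun _ _ => rfl
      map_smul' := fun _ _ => rfl }
  exact FiniteDimensional.of_injective restrict fun f g h => by
    ext m
    exact LinearMap.congr_fun h m

lemma IsFiniteLinear.finiteDimensional_hom (k : Type u) [Field k] {X : Type u₁} [Category.{v₁} X]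
    [Preadditive X] [CategoryTheory.Linear k X] [IsFiniteLinear k X] (a b : X) :
    FiniteDimensional k (a ⟶ b) := by
  obtain ⟨A, _, _, _, e, _, _, _⟩ := IsFiniteLinear.out (k := k) (C := X)
  have := FGModuleCat.finiteDimensional_hom k A (e.obj a) (e.obj b)
  exact FiniteDimensional.of_injective (Functor.mapLinearMap k e) fun _ _ h => e.map_injective h

lemma eq_of_forall_dual_apply_eq {R V : Type*} [CommRing R] [AddCommGroup V] [Module R V]
    [Module.Projective R V] {v w : V} (h : ∀ ψ : Module.Dual R V, ψ v = ψ w) : v = w :=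
  Module.eval_apply_injective R (LinearMap.ext h)

section DualTranspose

variable {k : Type u} [Field k] {V V' W W' : Type*} [AddCommGroup V] [Module k V]
  [AddCommGroup V'] [Module k V'] [AddCommGroup W] [Module k W] [AddCommGroup W'] [Module k W']

noncomputable def dualTranspose [FiniteDimensional k V] (θ : Module.Dual k V →ₗ[k] W) :
    Module.Dual k W →ₗ[k] V :=
  (Module.evalEquiv k V).symm.toLinearMap ∘ₗ θ.dualMap

@[simp]
lemma apply_dualTranspose [FiniteDimensional k V] (θ : Module.Dual k V →ₗ[k] W)
    (φ : Module.Dual k W) (ψ : Module.Dual k V) : ψ (dualTranspose θ φ) = φ (θ ψ) :=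
  Module.apply_evalEquiv_symm_apply k V ψ (θ.dualMap φ)

@[simp]
lemma dualTranspose_dualTranspose [FiniteDimensional k V] [FiniteDimensional k W]
    (θ : Module.Dual k V →ₗ[k] W) : dualTranspose (dualTranspose θ) = θ :=
  LinearMap.ext fun _ => eq_of_forall_dual_apply_eq fun _ => by
    rw [apply_dualTranspose, apply_dualTranspose]

lemma dualTranspose_comp [FiniteDimensional k V] (g : W →ₗ[k] W')
    (θ : Module.Dual k V →ₗ[k] W) : dualTranspose (g ∘ₗ θ) = dualTranspose θ ∘ₗ g.dualMap :=
  rfl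

lemma dualTranspose_comp_dualMap [FiniteDimensional k V] [FiniteDimensional k V']
    (h : V' →ₗ[k] V) (θ : Module.Dual k V' →ₗ[k] W) :
    dualTranspose (θ ∘ₗ h.dualMap) = h ∘ₗ dualTranspose θ :=
  LinearMap.ext fun φ => eq_of_forall_dual_apply_eq fun ψ =>
    (apply_dualTranspose _ φ ψ).trans (apply_dualTranspose θ φ (ψ ∘ₗ h)).symm

end DualTranspose

section Wedges

variable {k : Type u} [Field k] {X : Type u₁} [Category.{v₁} X] [Preadditive X]
  [CategoryTheory.Linear k X]

open CategoryTheory.Linear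

/-- The wedges `d ⟶ Hom(x, y) ⊗ x` over the end defining `Π̄_X y`. -/
def IsEndWedge {y d : X} (θ : ∀ x : X, Module.Dual k (x ⟶ y) →ₗ[k] (d ⟶ x)) : Prop :=
  ∀ ⦃x x' : X⦄ (f : x ⟶ x'), rightComp k d f ∘ₗ θ x = θ x' ∘ₗ (leftComp k y f).dualMap

/-- The wedges `Hom(y, x)* ⊗ x ⟶ d` under the coend defining `Π_X y`. -/
def IsCoendWedge {y d : X} (θ : ∀ x : X, Module.Dual k (y ⟶ x) →ₗ[k] (x ⟶ d)) : Prop :=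
  ∀ ⦃x x' : X⦄ (f : x ⟶ x'), leftComp k d f ∘ₗ θ x' = θ x ∘ₗ (rightComp k y f).dualMap

variable [∀ a b : X, FiniteDimensional k (a ⟶ b)]

lemma IsCoendWedge.dualTranspose {y d : X}
    {θ : ∀ x : X, Module.Dual k (y ⟶ x) →ₗ[k] (x ⟶ d)} (hθ : IsCoendWedge θ) :
    IsEndWedge fun x => EW.dualTranspose (θ x) := fun x x' f => by
  rw [← dualTranspose_comp_dualMap, ← hθ f, dualTranspose_comp]

lemma IsEndWedge.dualTranspose {y d : X}
    {θ : ∀ x : X, Module.Dual k (x ⟶ y) →ₗ[k] (d ⟶ x)} (hθ : IsEndWedge θ) :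
    IsCoendWedge fun x => EW.dualTranspose (θ x) := fun x x' f => by
  rw [← dualTranspose_comp, hθ f, dualTranspose_comp_dualMap]

end Wedges

namespace LexNakayamaData

variable {k : Type u} [Field k] {X : Type u₁} [Category.{v₁} X] [Preadditive X]
  [CategoryTheory.Linear k X] (L : LexNakayamaData k (X := X))

open CategoryTheory.Linear

def compπ {y d : X} (κ : d ⟶ L.N.obj y) (x : X) : Module.Dual k (x ⟶ y) →ₗ[k] (d ⟶ x) :=
  leftComp k x κ ∘ₗ L.π y x

lemma isEndWedge_compπ {y d : X} (κ : d ⟶ L.N.obj y) : IsEndWedge (L.compπ κ) :=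
  fun x x' f => LinearMap.ext fun ψ => by
    simp only [compπ, LinearMap.comp_apply, leftComp_apply, rightComp_apply, Category.assoc]
    exact congrArg (κ ≫ ·) (L.wedge f ψ)

noncomputable def lift {y d : X} (θ : ∀ x : X, Module.Dual k (x ⟶ y) →ₗ[k] (d ⟶ x))
    (hθ : IsEndWedge θ) : d ⟶ L.N.obj y :=
  (L.universal y d θ fun f ψ => LinearMap.congr_fun (hθ f) ψ).exists.choose

lemma compπ_lift {y d : X} (θ : ∀ x : X, Module.Dual k (x ⟶ y) →ₗ[k] (d ⟶ x))
    (hθ : IsEndWedge θ) : L.compπ (L.lift θ hθ) = θ :=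
  funext fun x => LinearMap.ext fun ψ =>
    ((L.universal y d θ fun f ψ => LinearMap.congr_fun (hθ f) ψ).exists.choose_spec x ψ).symm

lemma hom_ext {y d : X} {κ κ' : d ⟶ L.N.obj y} (h : L.compπ κ = L.compπ κ') : κ = κ' :=
  (L.universal y d (L.compπ κ') fun f ψ => LinearMap.congr_fun (L.isEndWedge_compπ κ' f) ψ).unique
    (fun x ψ => (LinearMap.congr_fun (congrFun h x) ψ).symm) (fun _ _ => rfl)

lemma compπ_comp {y d d' : X} (h : d' ⟶ d) (κ : d ⟶ L.N.obj y) (x : X) :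
    L.compπ (h ≫ κ) x = leftComp k x h ∘ₗ L.compπ κ x :=
  LinearMap.ext fun _ => Category.assoc _ _ _

lemma compπ_comp_map {y y' d : X} (κ : d ⟶ L.N.obj y) (g : y ⟶ y') (x : X) :
    L.compπ (κ ≫ L.N.map g) x = L.compπ κ x ∘ₗ (rightComp k x g).dualMap :=
  LinearMap.ext fun ψ => (Category.assoc _ _ _).trans (congrArg (κ ≫ ·) (L.natural g x ψ))

end LexNakayamaData

namespace RexNakayamaData

variable {k : Type u} [Field k] {X : Type u₁} [Category.{v₁} X] [Preadditive X]
  [CategoryTheory.Linear k X] (R : RexNakayamaData k (X := X))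

open CategoryTheory.Linear

def ιComp {y d : X} (κ : R.N.obj y ⟶ d) (x : X) : Module.Dual k (y ⟶ x) →ₗ[k] (x ⟶ d) :=
  rightComp k x κ ∘ₗ R.ι y x

lemma isCoendWedge_ιComp {y d : X} (κ : R.N.obj y ⟶ d) : IsCoendWedge (R.ιComp κ) :=
  fun x x' f => LinearMap.ext fun ψ => by
    simp only [ιComp, LinearMap.comp_apply, leftComp_apply, rightComp_apply, ← Category.assoc]
    exact congrArg (· ≫ κ) (R.wedge f ψ)

noncomputable def desc {y d : X} (θ : ∀ x : X, Module.Dual k (y ⟶ x) →ₗ[k] (x ⟶ d))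
    (hθ : IsCoendWedge θ) : R.N.obj y ⟶ d :=
  (R.universal y d θ fun f ψ => LinearMap.congr_fun (hθ f) ψ).exists.choose

lemma ιComp_desc {y d : X} (θ : ∀ x : X, Module.Dual k (y ⟶ x) →ₗ[k] (x ⟶ d))
    (hθ : IsCoendWedge θ) : R.ιComp (R.desc θ hθ) = θ :=
  funext fun x => LinearMap.ext fun ψ =>
    ((R.universal y d θ fun f ψ => LinearMap.congr_fun (hθ f) ψ).exists.choose_spec x ψ).symm

lemma hom_ext {y d : X} {κ κ' : R.N.obj y ⟶ d} (h : R.ιComp κ = R.ιComp κ') : κ = κ' :=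
  (R.universal y d (R.ιComp κ') fun f ψ => LinearMap.congr_fun (R.isCoendWedge_ιComp κ' f) ψ).unique
    (fun x ψ => (LinearMap.congr_fun (congrFun h x) ψ).symm) (fun _ _ => rfl)

lemma ιComp_comp {y d d' : X} (κ : R.N.obj y ⟶ d) (g : d ⟶ d') (x : X) :
    R.ιComp (κ ≫ g) x = rightComp k x g ∘ₗ R.ιComp κ x :=
  LinearMap.ext fun _ => (Category.assoc _ _ _).symm

lemma ιComp_map_comp {y y' d : X} (h : y' ⟶ y) (κ : R.N.obj y ⟶ d) (x : X) :
    R.ιComp (R.N.map h ≫ κ) x = R.ιComp κ x ∘ₗ (leftComp k x h).dualMap :=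
  LinearMap.ext fun ψ => (Category.assoc _ _ _).symm.trans (congrArg (· ≫ κ) (R.natural h x ψ))

variable [∀ a b : X, FiniteDimensional k (a ⟶ b)] (L : LexNakayamaData k (X := X))

noncomputable def homEquiv (a b : X) : (R.N.obj a ⟶ b) ≃ (a ⟶ L.N.obj b) where
  toFun κ := L.lift (fun x => dualTranspose (R.ιComp κ x)) (R.isCoendWedge_ιComp κ).dualTranspose
  invFun η := R.desc (fun x => dualTranspose (L.compπ η x)) (L.isEndWedge_compπ η).dualTranspose
  left_inv κ := R.hom_ext <| by simp only [ιComp_desc, LexNakayamaData.compπ_lift,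
    dualTranspose_dualTranspose]
  right_inv η := L.hom_ext <| by simp only [LexNakayamaData.compπ_lift, ιComp_desc,
    dualTranspose_dualTranspose]

noncomputable def adjunction : R.N ⊣ L.N :=
  Adjunction.mkOfHomEquiv
    { homEquiv := R.homEquiv L
      homEquiv_naturality_left_symm := fun h η => R.hom_ext <| funext fun x => by
        simp only [homEquiv, Equiv.coe_fn_symm_mk, ιComp_desc, ιComp_map_comp,
          LexNakayamaData.compπ_comp, dualTranspose_comp]
      homEquiv_naturality_right := fun κ g => L.hom_ext <| funext fun x => by
        simp only [homEquiv, Equiv.coe_fn_mk, LexNakayamaData.compπ_lift,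
          LexNakayamaData.compπ_comp_map, ιComp_comp, dualTranspose_comp] }

end RexNakayamaData

end EW

/-- For any finite `k`-linear category `X`, the Nakayama functor
`Π_X = ∫^{x} Hom_X(-, x)* ⊗ x` is left adjoint to the left exact Nakayama functor
`Π̄_X = ∫_{x} Hom_X(x, -) ⊗ x`.  The two Nakayama functors are specified through their
universal properties as pointwise (co)ends, via the data `R : RexNakayamaData` and
`L : LexNakayamaData`. -/
theorem statement_12 (k : Type u) [Field k]
    {X : Type u₁} [Category.{v₁} X] [Preadditive X] [CategoryTheory.Linear k X]
    [EW.IsFiniteLinear k X]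
    (R : EW.RexNakayamaData k (X := X)) (L : EW.LexNakayamaData k (X := X)) :
    Nonempty (R.N ⊣ L.N) :=
  have := EW.IsFiniteLinear.finiteDimensional_hom k (X := X)
  ⟨R.adjunction L⟩
end
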